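/- arXiv:1201.0585 — 2 statements merged into one kernel-verified Lean document; each statement's English description precedes it below -/
import Mathlib

section
/- Let M/K be a finite Galois extension of fields with Galois group G, let H ≤ G be a subgroup and L = M^H its fixed field. Then the M-algebra homomorphism M ⊗_K L → ∏_{gH ∈ G/H} M sending m ⊗ l to the tuple (m · g(l))_{gH ∈ G/H} is well defined (g(l) depends only on the coset gH since l is H-fixed) and is an isomorphism of M-algebras. -/
/-!
The map is the product of the `M`-algebra homomorphisms `M ⊗_K L → M`, `m ⊗ l ↦ m · g(l)`, one
for each coset `gH`. They are pairwise distinct since `H` is the full fixing group of `L`, so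
their kernels are pairwise distinct maximal ideals and the Chinese remainder theorem makes the
map surjective. Both sides have dimension `[L : K] = [G : H]` over `M`, so it is also injective.
-/

open TensorProduct

theorem AlgHom.ext_ker {R A : Type*} [CommRing R] [CommRing A] [Algebra R A]
    {f g : A →ₐ[R] R} (h : RingHom.ker f = RingHom.ker g) : f = g := by
  ext x
  have hx : g (x - algebraMap R A (f x)) = 0 := by
    rw [← RingHom.mem_ker, ← h, RingHom.mem_ker]
    simp
  rw [map_sub, AlgHom.commutes, Algebra.algebraMap_self, RingHom.id_apply, sub_eq_zero] at hx
  exact hx.symm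

theorem AlgHom.pi_surjective_of_injective {M A ι : Type*} [Field M] [CommRing A] [Algebra M A]
    [_root_.Finite ι] {f : ι → A →ₐ[M] M} (hf : Function.Injective f) :
    Function.Surjective (AlgHom.pi f) := by
  have hmax i : (RingHom.ker (f i)).IsMaximal :=
    RingHom.ker_isMaximal_of_surjective _ fun m => ⟨algebraMap M A m, by simp⟩
  have hcop : Pairwise fun i j => IsCoprime (RingHom.ker (f i)) (RingHom.ker (f j)) :=
    fun i j hij => Ideal.isCoprime_of_isMaximal fun h => hij (hf (ext_ker h))
  intro y
  obtain ⟨a, ha⟩ := Ideal.exists_forall_sub_mem_ideal hcop fun i => algebraMap M A (y i)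
  exact ⟨a, funext fun i => by simpa [RingHom.mem_ker, sub_eq_zero] using ha i⟩

namespace Algebra.TensorProduct

variable {K L M ι : Type*} [Field K] [CommRing L] [Algebra K L] [Field M] [Algebra K M]

noncomputable def toPi (σ : ι → L →ₐ[K] M) : M ⊗[K] L →ₐ[M] (ι → M) :=
  AlgHom.pi fun i => lift (Algebra.ofId M M) (σ i) fun _ _ => .all _ _

@[simp]
theorem toPi_tmul (σ : ι → L →ₐ[K] M) (m : M) (l : L) (i : ι) :
    toPi σ (m ⊗ₜ l) i = m * σ i l := by
  simp [toPi]

theorem toPi_bijective [FiniteDimensional K L] [_root_.Finite ι] {σ : ι → L →ₐ[K] M}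
    (hσ : Function.Injective σ) (hcard : Nat.card ι = Module.finrank K L) :
    Function.Bijective (toPi σ) := by
  have := Fintype.ofFinite ι
  have hsurj : Function.Surjective (toPi σ) := by
    refine AlgHom.pi_surjective_of_injective fun i j hij => hσ (AlgHom.ext fun l => ?_)
    simpa using congr($hij (1 ⊗ₜ l))
  have hrank : Module.finrank M (M ⊗[K] L) = Module.finrank M (ι → M) := by
    rw [Module.finrank_baseChange, Module.finrank_fintype_fun_eq_card,
      ← Nat.card_eq_fintype_card, hcard]
  refine ⟨?_, hsurj⟩
  exact (LinearMap.injective_iff_surjective_of_finrank_eq_finrank hrank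
    (f := (toPi σ).toLinearMap)).mpr hsurj

end Algebra.TensorProduct

namespace IntermediateField

variable {K M : Type*} [Field K] [Field M] [Algebra K M]

def cosetEmbedding (H : Subgroup Gal(M/K)) : Gal(M/K) ⧸ H → (fixedField H →ₐ[K] M) :=
  Quotient.lift (s := QuotientGroup.leftRel H) (fun g => (g : M →ₐ[K] M).comp (fixedField H).val)
    fun a b hab => by
      ext l
      have hl : a⁻¹ (b l) = l := l.2 ⟨_, QuotientGroup.leftRel_apply.mp hab⟩
      simpa using congr(a $hl).symm

@[simp]
theorem cosetEmbedding_mk (H : Subgroup Gal(M/K)) (g : Gal(M/K)) (l : fixedField H) :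
    cosetEmbedding H g l = g l :=
  rfl

theorem cosetEmbedding_injective [FiniteDimensional K M] (H : Subgroup Gal(M/K)) :
    Function.Injective (cosetEmbedding H) := by
  intro p q hpq
  obtain ⟨a, rfl⟩ := QuotientGroup.mk_surjective p
  obtain ⟨b, rfl⟩ := QuotientGroup.mk_surjective q
  refine QuotientGroup.eq.mpr ?_
  rw [← fixingSubgroup_fixedField H, mem_fixingSubgroup_iff]
  intro x hx
  have hab : a x = b x := by simpa using congr($hpq ⟨x, hx⟩)
  simp [AlgEquiv.mul_apply, ← hab]

theorem card_quotient_eq_finrank_fixedField [FiniteDimensional K M] [IsGalois K M]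
    (H : Subgroup Gal(M/K)) : Nat.card (Gal(M/K) ⧸ H) = Module.finrank K (fixedField H) := by
  rw [finrank_eq_fixingSubgroup_index, fixingSubgroup_fixedField, Subgroup.index_eq_card]

end IntermediateField

/-- Let `M/K` be a finite Galois extension with Galois group `G`, `H ≤ G` a subgroup
and `L = M^H` its fixed field.  The map `M ⊗_K L → ∏_{G/H} M`, `m ⊗ l ↦ (m·g(l))_{gH}`,
is a well-defined isomorphism of `M`-algebras. -/
theorem tensor_fixedField_iso_pi (K M : Type*) [Field K] [Field M] [Algebra K M]
    [FiniteDimensional K M] [IsGalois K M] (H : Subgroup (M ≃ₐ[K] M)) :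
    ∃ e : (M ⊗[K] (IntermediateField.fixedField H)) ≃ₐ[M]
        (((M ≃ₐ[K] M) ⧸ H) → M),
      ∀ (m : M) (l : IntermediateField.fixedField H) (g : M ≃ₐ[K] M),
        e (m ⊗ₜ[K] l) (QuotientGroup.mk g) = m * g (l : M) :=
  ⟨.ofBijective _ (Algebra.TensorProduct.toPi_bijective
      (IntermediateField.cosetEmbedding_injective H)
      (IntermediateField.card_quotient_eq_finrank_fixedField H)),
    fun m l g => by simp⟩
end

section
/- Let R be a commutative ring, G a finite group acting on R by ring automorphisms, P = R^G the invariant subring, H ≤ G a subgroup, and Q = R^H. Let p be a prime ideal of P and r a prime ideal of R lying over p, and let D(r) = {g ∈ G : g(r) = r} be the decomposition group of r. Then the assignment g ↦ (g • r) ∩ Q induces a well-defined bijection from the set of double cosets H\G/D(r) to the set of prime ideals of Q lying over p. -/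
open Pointwise

/-- The subring of elements of `R` fixed by every element of a subgroup `H` of `G`. -/
def fixedSubring (G : Type*) [Group G] (R : Type*) [CommRing R]
    [MulSemiringAction G R] (H : Subgroup G) : Subring R where
  carrier := {x : R | ∀ g ∈ H, g • x = x}
  zero_mem' := fun g _ => smul_zero g
  one_mem' := fun g _ => smul_one g
  add_mem' := fun {a b} ha hb g hg => by rw [smul_add, ha g hg, hb g hg]
  neg_mem' := fun {a} ha g hg => by rw [smul_neg, ha g hg]
  mul_mem' := fun {a b} ha hb g hg => by rw [smul_mul', ha g hg, hb g hg]

theorem fixedSubring_le {G : Type*} [Group G] {R : Type*} [CommRing R]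
    [MulSemiringAction G R] (H : Subgroup G) :
    fixedSubring G R ⊤ ≤ fixedSubring G R H :=
  fun _ hx g _ => hx g trivial

/-!
`R^H` is exactly the ring of `H`-invariants, so `R` is integral over it (every prime of `R^H`
has a prime of `R` above it) and `H` acts transitively on the primes of `R` above a given prime
of `R^H`. For `H = G` this identifies the primes of `R` over `p` with the orbit `G • r`; for `H`
itself it says that `g • r` and `g' • r` cut out the same prime of `R^H` iff
`g' • r ∈ H • (g • r)`, i.e. iff `g' ∈ H g D(r)`.
-/

namespace fixedSubring

variable {G : Type*} [Group G] {R : Type*} [CommRing R] [MulSemiringAction G R] (H : Subgroup G)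

instance : SMulCommClass H (fixedSubring G R H) R where
  smul_comm h q x := by
    rw [Algebra.smul_def, Algebra.smul_def, smul_mul']
    congr 1
    exact q.2 h h.2

instance : Algebra.IsInvariant (fixedSubring G R H) R H where
  isInvariant x hx := ⟨⟨x, fun g hg => hx ⟨g, hg⟩⟩, rfl⟩

theorem comap_comap_inclusion (I : Ideal R) :
    (I.comap (fixedSubring G R H).subtype).comap (Subring.inclusion (fixedSubring_le H)) =
      I.comap (fixedSubring G R ⊤).subtype :=
  Ideal.comap_comap _ _

variable [Finite G]

theorem comap_subtype_eq_iff {I J : Ideal R} [I.IsPrime] [J.IsPrime] :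
    J.comap (fixedSubring G R H).subtype = I.comap (fixedSubring G R H).subtype ↔
      ∃ h ∈ H, J = h • I := by
  constructor
  · intro hIJ
    obtain ⟨h, hJ⟩ :=
      Algebra.IsInvariant.exists_smul_of_under_eq (fixedSubring G R H) R H I J hIJ.symm
    exact ⟨h, h.2, hJ⟩
  · rintro ⟨h, hh, rfl⟩
    exact Ideal.under_smul (fixedSubring G R H) I (⟨h, hh⟩ : H)

theorem exists_isPrime_comap_subtype_eq (q : Ideal (fixedSubring G R H)) [q.IsPrime] :
    ∃ J : Ideal R, J.IsPrime ∧ J.comap (fixedSubring G R H).subtype = q := by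
  have := Algebra.IsInvariant.isIntegral (fixedSubring G R H) R H
  obtain ⟨J, hJ, hq⟩ := (Ideal.nonempty_primesOver q (S := R)).some
  exact ⟨J, hJ, hq.over.symm⟩

end fixedSubring

theorem MulAction.smul_eq_smul_iff_exists_mem_stabilizer {G α : Type*} [Group G] [MulAction G α]
    {a b : G} {x : α} : b • x = a • x ↔ ∃ d ∈ stabilizer G x, b = a * d := by
  refine ⟨fun h => ⟨a⁻¹ * b, ?_, by group⟩, ?_⟩
  · rw [mem_stabilizer_iff, mul_smul, h, inv_smul_smul]
  · rintro ⟨d, hd, rfl⟩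
    rw [mul_smul, mem_stabilizer_iff.mp hd]

theorem doset_bijection_primes_over_general {G : Type*} [Group G] [Finite G]
    {R : Type*} [CommRing R] [MulSemiringAction G R] (H : Subgroup G)
    (p : Ideal (fixedSubring G R ⊤))
    (r : Ideal R) (hr : r.IsPrime)
    (hlie : r.comap (fixedSubring G R ⊤).subtype = p) :
    (∀ g : G,
        ((g • r).comap (fixedSubring G R H).subtype).IsPrime ∧
        ((g • r).comap (fixedSubring G R H).subtype).comap
          (Subring.inclusion (fixedSubring_le H)) = p) ∧
    (∀ q : Ideal (fixedSubring G R H), q.IsPrime →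
        q.comap (Subring.inclusion (fixedSubring_le H)) = p →
        ∃ g : G, (g • r).comap (fixedSubring G R H).subtype = q) ∧
    (∀ g g' : G,
        (g • r).comap (fixedSubring G R H).subtype =
          (g' • r).comap (fixedSubring G R H).subtype ↔
        ∃ h ∈ H, ∃ d ∈ MulAction.stabilizer G r, g' = h * g * d) := by
  have hgr (g : G) : (g • r).IsPrime := hr.smul g
  refine ⟨fun g => ⟨Ideal.comap_isPrime _ _, ?_⟩, fun q hq hqp => ?_, fun g g' => ?_⟩
  · rw [fixedSubring.comap_comap_inclusion, ← hlie,
      (fixedSubring.comap_subtype_eq_iff ⊤).mpr ⟨g, trivial, rfl⟩]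
  · obtain ⟨J, hJ, hJq⟩ := fixedSubring.exists_isPrime_comap_subtype_eq H q
    have hJr : J.comap (fixedSubring G R ⊤).subtype = r.comap (fixedSubring G R ⊤).subtype := by
      rw [hlie, ← fixedSubring.comap_comap_inclusion, hJq, hqp]
    obtain ⟨g, -, rfl⟩ := (fixedSubring.comap_subtype_eq_iff ⊤).mp hJr
    exact ⟨g, hJq⟩
  · rw [eq_comm, fixedSubring.comap_subtype_eq_iff]
    simp only [← mul_smul, MulAction.smul_eq_smul_iff_exists_mem_stabilizer]

/-- Let `G` be a finite group acting on a commutative ring `R`, `P = R^G`,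
`H ≤ G` and `Q = R^H`.  Let `p` be a prime of `P` and `r` a prime of `R` lying
over `p`, with decomposition group `D(r)`.  Then `g ↦ (g • r) ∩ Q` induces a
well-defined bijection from the double cosets `H\G/D(r)` onto the set of primes
of `Q` lying over `p`. -/
theorem doset_bijection_primes_over {G : Type*} [Group G] [Finite G]
    {R : Type*} [CommRing R] [MulSemiringAction G R] (H : Subgroup G)
    (p : Ideal (fixedSubring G R ⊤)) (hp : p.IsPrime)
    (r : Ideal R) (hr : r.IsPrime)
    (hlie : r.comap (fixedSubring G R ⊤).subtype = p) :
    (∀ g : G,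
        ((g • r).comap (fixedSubring G R H).subtype).IsPrime ∧
        ((g • r).comap (fixedSubring G R H).subtype).comap
          (Subring.inclusion (fixedSubring_le H)) = p) ∧
    (∀ q : Ideal (fixedSubring G R H), q.IsPrime →
        q.comap (Subring.inclusion (fixedSubring_le H)) = p →
        ∃ g : G, (g • r).comap (fixedSubring G R H).subtype = q) ∧
    (∀ g g' : G,
        (g • r).comap (fixedSubring G R H).subtype =
          (g' • r).comap (fixedSubring G R H).subtype ↔
        ∃ h ∈ H, ∃ d ∈ MulAction.stabilizer G r, g' = h * g * d) :=
  doset_bijection_primes_over_general H p r hr hlie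
end
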